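/- A locally stratified propositional program with finitely many strata and finite clause bodies has a unique perfect model, obtained by the iterated construction N₀ = ⟨∅,∅⟩, N_{α+1} = ⟨Ψ_{N_α}^{↑ω}, 𝓑_{α+1} − Ψ_{N_α}^{↑ω}⟩, and this sequence is increasing in the Fitting ordering. -/

import Mathlib

/-- Literals: a positive atom or a negated atom (`true` = negated). -/
abbrev Lit (A : Type*) := Bool × A

/-- A literal is true under the partial interpretation J = ⟨T,F⟩ if it is a
positive atom in T or a negated atom whose atom is in F. -/
def litTrue {A : Type*} (J : Set A × Set A) : Lit A → Prop
  | (false, a) => a ∈ J.1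
  | (true, a) => a ∈ J.2

/-- Ψ_J(I) = { p : ∃ clause p ← L₁,…,Lₙ in P with each Lᵢ either true under J
or a positive atom in I }. -/
def Psi {A : Type*} (P : Set (A × List (Lit A))) (J : Set A × Set A)
    (I : Set A) : Set A :=
  {p | ∃ body, (p, body) ∈ P ∧
        ∀ L ∈ body, litTrue J L ∨ (L.1 = false ∧ L.2 ∈ I)}

/-- Finite iterates of Ψ_J from ∅. -/
def PsiIter {A : Type*} (P : Set (A × List (Lit A))) (J : Set A × Set A) :
    ℕ → Set A
  | 0 => ∅
  | n + 1 => Psi P J (PsiIter P J n)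

/-- Ψ_J^{↑ω}, the ω-iteration of Ψ_J from ∅. -/
def PsiOmega {A : Type*} (P : Set (A × List (Lit A))) (J : Set A × Set A) :
    Set A :=
  ⋃ n, PsiIter P J n

/-- 𝓑_α = ⋃_{β<α} S_β, the atoms in strata below α. -/
def Bup {A : Type*} (strat : A → ℕ) (α : ℕ) : Set A := {p | strat p < α}

/-- The iterated construction of the perfect model:
N₀ = ⟨∅,∅⟩, N_{α+1} = ⟨Ψ_{N_α}^{↑ω}, 𝓑_{α+1} − Ψ_{N_α}^{↑ω}⟩. -/
def N {A : Type*} (P : Set (A × List (Lit A))) (strat : A → ℕ) :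
    ℕ → Set A × Set A
  | 0 => (∅, ∅)
  | α + 1 => (PsiOmega P (N P strat α), Bup strat (α + 1) \ PsiOmega P (N P strat α))

/-!
Ψ is monotone in both arguments for the Fitting ordering, so passing from N_α to N_{α+1}
can only enlarge the true part. For the false part, the point is that an atom of stratum
at most α derived from N_{α+1} was already derived from N_α: by local stratification its
derivation uses positive atoms of stratum at most α, which N_{α+1} takes from Ψ_{N_α}^{↑ω}
itself, and negated atoms of stratum below α, on which N_{α+1} and N_α agree. Since bodies
are finite, Ψ_J^{↑ω} is closed under Ψ_J, which absorbs the whole derivation.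
-/

section

open Filter

variable {A : Type*}

def IsLocallyStratified (P : Set (A × List (Lit A))) (strat : A → ℕ) : Prop :=
  ∀ c ∈ P, ∀ L ∈ c.2,
    (L.1 = false → strat L.2 ≤ strat c.1) ∧ (L.1 = true → strat L.2 < strat c.1)

section Psi

variable (P : Set (A × List (Lit A)))

-- The product order on `Set A × Set A` is the Fitting ordering.
lemma litTrue_mono {J J' : Set A × Set A} (hJ : J ≤ J') :
    ∀ {L : Lit A}, litTrue J L → litTrue J' L
  | (false, _), h => hJ.1 h
  | (true, _), h => hJ.2 h

lemma psi_mono {J J' : Set A × Set A} {I I' : Set A} (hJ : J ≤ J') (hI : I ⊆ I') :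
    Psi P J I ⊆ Psi P J' I' := by
  rintro p ⟨body, hb, hall⟩
  exact ⟨body, hb, fun L hL => (hall L hL).imp (litTrue_mono hJ) (And.imp_right (@hI _))⟩

lemma monotone_psiIter (J : Set A × Set A) : Monotone (PsiIter P J) := by
  refine monotone_nat_of_le_succ fun n => ?_
  induction n with
  | zero => exact Set.empty_subset _
  | succ n ih => exact psi_mono P le_rfl ih

lemma psiIter_mono {J J' : Set A × Set A} (hJ : J ≤ J') :
    ∀ n, PsiIter P J n ⊆ PsiIter P J' n
  | 0 => subset_rfl
  | n + 1 => psi_mono P hJ (psiIter_mono hJ n)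

lemma psiOmega_mono {J J' : Set A × Set A} (hJ : J ≤ J') :
    PsiOmega P J ⊆ PsiOmega P J' :=
  Set.iUnion_mono (psiIter_mono P hJ)

/-- Every clause body is a finite list, so its positive atoms in `Ψ_J^{↑ω}` all lie in a
single finite iterate. -/
lemma psi_psiOmega_subset (J : Set A × Set A) :
    Psi P J (PsiOmega P J) ⊆ PsiOmega P J := by
  rintro p ⟨body, hb, hall⟩
  have hev : ∀ L ∈ {L | L ∈ body}, ∀ᶠ n in atTop,
      litTrue J L ∨ (L.1 = false ∧ L.2 ∈ PsiIter P J n) := by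
    intro L hL
    rcases hall L hL with hT | ⟨hpos, hmem⟩
    · exact Eventually.of_forall fun _ => Or.inl hT
    · obtain ⟨m, hm⟩ := Set.mem_iUnion.1 hmem
      exact eventually_atTop.2 ⟨m, fun n hn => Or.inr ⟨hpos, monotone_psiIter P J hn hm⟩⟩
  obtain ⟨n, hn⟩ := ((body.finite_toSet.eventually_all).2 hev).exists
  exact Set.mem_iUnion.2 ⟨n + 1, body, hb, hn⟩

end Psi

variable {P : Set (A × List (Lit A))} {strat : A → ℕ}

lemma psiOmega_inter_bup_subset (hls : IsLocallyStratified P strat)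
    {J J' : Set A × Set A} {k : ℕ}
    (hT : J'.1 ∩ Bup strat (k + 1) ⊆ PsiOmega P J) (hF : J'.2 ∩ Bup strat k ⊆ J.2) :
    PsiOmega P J' ∩ Bup strat (k + 1) ⊆ PsiOmega P J := by
  rintro p ⟨hp, hpk⟩
  obtain ⟨n, hn⟩ := Set.mem_iUnion.1 hp
  clear hp
  induction n generalizing p with
  | zero => exact absurd hn (Set.notMem_empty p)
  | succ n ih =>
    obtain ⟨body, hb, hall⟩ := hn
    refine psi_psiOmega_subset P J ⟨body, hb, fun L hL => ?_⟩
    obtain ⟨hpos, hneg⟩ := hls _ hb L hL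
    rcases L with ⟨_ | _, a⟩
    · have hak : a ∈ Bup strat (k + 1) := (hpos rfl).trans_lt hpk
      rcases hall _ hL with hT' | ⟨-, ha⟩
      · exact Or.inr ⟨rfl, hT ⟨hT', hak⟩⟩
      · exact Or.inr ⟨rfl, ih hak ha⟩
    · rcases hall _ hL with hF' | ⟨h, -⟩
      · exact Or.inl (hF ⟨hF', (hneg rfl).trans_le (Nat.lt_succ_iff.1 hpk)⟩)
      · cases h

lemma N_succ_snd_inter_bup_subset {α : ℕ} (h : (N P strat α).1 ⊆ (N P strat (α + 1)).1) :
    (N P strat (α + 1)).2 ∩ Bup strat α ⊆ (N P strat α).2 := by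
  cases α with
  | zero => exact fun a ha => absurd ha.2 (Nat.not_lt_zero _)
  | succ δ => exact fun a ⟨⟨_, haT⟩, ha⟩ => ⟨ha, fun h' => haT (h h')⟩

lemma N_le_N_succ (hls : IsLocallyStratified P strat) :
    ∀ α, N P strat α ≤ N P strat (α + 1)
  | 0 => ⟨Set.empty_subset _, Set.empty_subset _⟩
  | α + 1 => by
    have ih := N_le_N_succ hls α
    refine ⟨psiOmega_mono P ih, fun p ⟨hp, hpT⟩ => ⟨Nat.lt_succ_of_lt hp, fun hp' => hpT ?_⟩⟩
    exact psiOmega_inter_bup_subset hls Set.inter_subset_left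
      (N_succ_snd_inter_bup_subset ih.1) ⟨hp', hp⟩

lemma monotone_N (hls : IsLocallyStratified P strat) : Monotone (N P strat) :=
  monotone_nat_of_le_succ (N_le_N_succ hls)

end

theorem stmt16_general {A : Type*} (P : Set (A × List (Lit A))) (strat : A → ℕ)
    (r : ℕ)
    (hls : ∀ c ∈ P, ∀ L ∈ c.2,
      (L.1 = false → strat L.2 ≤ strat c.1) ∧
      (L.1 = true → strat L.2 < strat c.1)) :
    ∀ α β, α ≤ β → β ≤ r →
      (N P strat α).1 ⊆ (N P strat β).1 ∧ (N P strat α).2 ⊆ (N P strat β).2 :=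
  fun _ _ hαβ _ => monotone_N hls hαβ

/-- For a locally stratified propositional program with finitely many strata
(r strata) and finite clause bodies, the sequence N₀, N₁, …, N_r of the
iterated perfect-model construction is increasing in the Fitting ordering
(T-components and F-components both increase). -/
theorem stmt16 {A : Type*} (P : Set (A × List (Lit A))) (strat : A → ℕ)
    (r : ℕ) (hfin : ∀ a : A, strat a < r)
    (hls : ∀ c ∈ P, ∀ L ∈ c.2,
      (L.1 = false → strat L.2 ≤ strat c.1) ∧
      (L.1 = true → strat L.2 < strat c.1)) :
    ∀ α β, α ≤ β → β ≤ r →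
      (N P strat α).1 ⊆ (N P strat β).1 ∧ (N P strat α).2 ⊆ (N P strat β).2 :=
  stmt16_general P strat r hls
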